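/- Let A_1, ..., A_m be n×n complex matrices and let α_1, ..., α_m be positive real numbers such that every eigenvalue of the matrix A = α_1 A_1 + ... + α_m A_m has strictly negative real part. Then there exists η > 0 such that the spectral radius of the product exp(η α_m A_m) · exp(η α_{m-1} A_{m-1}) · ... · exp(η α_1 A_1) is strictly less than 1. -/

import Mathlib

/-!
Write `Bᵢ = αᵢ • Aᵢ` and `S = ∑ Bᵢ`. On the generalized eigenspace of `S` for `μ`, `exp (t • S) v`
is `e^{tμ}` times a polynomial in `t`, so stability gives `exp (t • S) → 0` and `‖exp (T • S)‖ < 1`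
for some `T > 0`. The product `P τ = exp (τ • Bₘ) ⋯ exp (τ • B₁)` has the same value `1` and the
same derivative `S` at `τ = 0` as `exp (τ • S)`, and this forces `P (T / k) ^ k → exp (T • S)`
(the Lie product formula). Hence `‖P (T / k) ^ k‖ < 1` for some `k`, and Gelfand's bound
`ρ(a) ≤ ‖a ^ k‖ ^ (1 / k)` gives `ρ(P η) < 1` for `η = T / k`.
-/

open Filter Topology Asymptotics NormedSpace Finset Nat

theorem tendsto_natCast_smul_comp_div_of_isLittleO {E : Type*} [NormedAddCommGroup E]
    [NormedSpace ℝ E] {h : ℝ → E} (hh : h =o[𝓝 0] fun τ => τ) (T : ℝ) :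
    Tendsto (fun k : ℕ => (k : ℝ) • h (T / k)) atTop (𝓝 0) := by
  have hT : (fun k : ℕ => (k : ℝ) * (T / k)) =O[atTop] fun _ => (1 : ℝ) := by
    refine (isBigO_const_one ℝ T atTop).congr' ?_ EventuallyEq.rfl
    filter_upwards [eventually_ne_atTop 0] with k hk
    field_simp
  exact (isLittleO_one_iff ℝ).mp <| ((isBigO_refl _ _).smul_isLittleO
    (hh.comp_tendsto (tendsto_const_div_atTop_nhds_zero_nat T))).trans_isBigO hT

section NormedRing

variable {𝔸 : Type*} [NormedRing 𝔸] [NormOneClass 𝔸]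

theorem norm_pow_sub_pow_le {a b : 𝔸} {M : ℝ} (hM : 1 ≤ M) (ha : ‖a‖ ≤ M) (hb : ‖b‖ ≤ M) :
    ∀ k : ℕ, ‖a ^ k - b ^ k‖ ≤ k * M ^ k * ‖a - b‖
  | 0 => by simp
  | k + 1 => by
    have ih := norm_pow_sub_pow_le hM ha hb k
    have hak : ‖a ^ k‖ ≤ M ^ k := (norm_pow_le a k).trans (pow_le_pow_left₀ (norm_nonneg a) ha k)
    calc ‖a ^ (k + 1) - b ^ (k + 1)‖ = ‖a ^ k * (a - b) + (a ^ k - b ^ k) * b‖ := by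
          congr 1; noncomm_ring
      _ ≤ ‖a ^ k‖ * ‖a - b‖ + ‖a ^ k - b ^ k‖ * ‖b‖ :=
          norm_add_le_of_le (norm_mul_le _ _) (norm_mul_le _ _)
      _ ≤ M ^ k * ‖a - b‖ + k * M ^ k * ‖a - b‖ * M := by gcongr
      _ ≤ (k + 1 : ℕ) * M ^ (k + 1) * ‖a - b‖ := by
          have : M ^ k * ‖a - b‖ ≤ M ^ k * M * ‖a - b‖ := by
            gcongr
            exact le_mul_of_one_le_right (by positivity) hM
          push_cast
          rw [pow_succ]
          linarith

variable [NormedSpace ℝ 𝔸]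

theorem HasDerivAt.eventually_norm_le_one_add {f : ℝ → 𝔸} {D : 𝔸} (hf : HasDerivAt f D 0)
    (hf0 : f 0 = 1) : ∀ᶠ τ in 𝓝 0, ‖f τ‖ ≤ 1 + (‖D‖ + 1) * |τ| := by
  filter_upwards [hf.isLittleO.bound one_pos] with τ hτ
  simp only [hf0, sub_zero, one_mul, Real.norm_eq_abs] at hτ
  calc ‖f τ‖ = ‖1 + τ • D + (f τ - 1 - τ • D)‖ := by congr 1; abel
    _ ≤ ‖(1 : 𝔸)‖ + ‖τ • D‖ + ‖f τ - 1 - τ • D‖ := norm_add₃_le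
    _ ≤ 1 + (‖D‖ + 1) * |τ| := by
        rw [norm_one, norm_smul, Real.norm_eq_abs]
        linarith

theorem tendsto_pow_sub_pow_of_hasDerivAt {f g : ℝ → 𝔸} {D : 𝔸} (hf : HasDerivAt f D 0)
    (hg : HasDerivAt g D 0) (hf0 : f 0 = 1) (hg0 : g 0 = 1) (T : ℝ) :
    Tendsto (fun k : ℕ => f (T / k) ^ k - g (T / k) ^ k) atTop (𝓝 0) := by
  set C := ‖D‖ + 1
  have hτ : Tendsto (fun k : ℕ => T / k) atTop (𝓝 0) := tendsto_const_div_atTop_nhds_zero_nat T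
  have hsmall : (fun τ => f τ - g τ) =o[𝓝 0] fun τ => τ := by
    simpa [hf0, hg0] using (hf.sub hg).isLittleO
  have hdiff := (tendsto_natCast_smul_comp_div_of_isLittleO hsmall T).norm
  rw [norm_zero] at hdiff
  refine squeeze_zero_norm' ?_ (by simpa using hdiff.const_mul (Real.exp (C * |T|)))
  filter_upwards [hτ.eventually (hf.eventually_norm_le_one_add hf0),
    hτ.eventually (hg.eventually_norm_le_one_add hg0), eventually_ne_atTop 0] with k hfk hgk hk
  have hM : (1 + C * |T / k|) ^ k ≤ Real.exp (C * |T|) := by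
    calc (1 + C * |T / k|) ^ k ≤ Real.exp (C * |T / k|) ^ k := by
          refine pow_le_pow_left₀ (by positivity) ?_ k
          linarith [Real.add_one_le_exp (C * |T / k|)]
      _ = Real.exp (C * |T|) := by
          rw [← Real.exp_nat_mul, abs_div, Nat.abs_cast]
          field_simp
  calc ‖f (T / k) ^ k - g (T / k) ^ k‖ ≤ k * (1 + C * |T / k|) ^ k * ‖f (T / k) - g (T / k)‖ :=
        norm_pow_sub_pow_le (le_add_of_nonneg_right (by positivity)) hfk hgk k
    _ ≤ Real.exp (C * |T|) * ‖(k : ℝ) • (f (T / k) - g (T / k))‖ := by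
        rw [norm_smul, Real.norm_natCast, mul_comm (k : ℝ), mul_assoc]
        gcongr

end NormedRing

section ExpProduct

variable {𝔸 : Type*} [NormedRing 𝔸] [NormedAlgebra ℝ 𝔸] [CompleteSpace 𝔸]

theorem hasDerivAt_list_prod_exp_smul (l : List 𝔸) :
    HasDerivAt (fun τ : ℝ => (l.map fun x => exp (τ • x)).prod) l.sum 0 := by
  induction l with
  | nil => exact hasDerivAt_const 0 1
  | cons x l ih =>
    refine ((hasDerivAt_exp_smul_const x (0 : ℝ)).mul ih).congr_deriv ?_
    simp

theorem tendsto_list_prod_exp_smul_div_pow [NormOneClass 𝔸] (l : List 𝔸) (T : ℝ) :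
    Tendsto (fun k : ℕ => (l.map fun x => exp ((T / k) • x)).prod ^ k) atTop
      (𝓝 (exp (T • l.sum))) := by
  have hdiff := tendsto_pow_sub_pow_of_hasDerivAt (hasDerivAt_list_prod_exp_smul l)
    (by simpa using hasDerivAt_exp_smul_const l.sum (0 : ℝ)) (by simp) (by simp) T
  have hexp : (fun k : ℕ => exp ((T / k) • l.sum) ^ k) =ᶠ[atTop] fun _ => exp (T • l.sum) := by
    let _ : NormedAlgebra ℚ 𝔸 := NormedAlgebra.restrictScalars ℚ ℝ 𝔸
    filter_upwards [eventually_ne_atTop 0] with k hk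
    rw [← exp_nsmul, ← Nat.cast_smul_eq_nsmul ℝ, smul_smul]
    field_simp
  simpa using hdiff.add (tendsto_const_nhds.congr' hexp.symm)

end ExpProduct

theorem Complex.tendsto_exp_mul_mul_pow_atTop {μ : ℂ} (hμ : μ.re < 0) (j : ℕ) :
    Tendsto (fun t : ℝ => Complex.exp (t * μ) * (t : ℂ) ^ j) atTop (𝓝 0) := by
  rw [tendsto_zero_iff_norm_tendsto_zero]
  refine (tendsto_rpow_mul_exp_neg_mul_atTop_nhds_zero j (-μ.re) (by linarith)).congr' ?_
  filter_upwards [eventually_ge_atTop 0] with t ht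
  simp [Complex.norm_exp, abs_of_nonneg ht, Real.rpow_natCast, mul_comm]

theorem exp_smul_eq_exp_mul_smul_exp_smul_sub {𝔸 : Type*} [NormedRing 𝔸] [NormedAlgebra ℂ 𝔸]
    [CompleteSpace 𝔸] (a : 𝔸) (z μ : ℂ) :
    exp (z • a) = Complex.exp (z * μ) • exp (z • (a - μ • 1)) := by
  let _ : NormedAlgebra ℚ 𝔸 := NormedAlgebra.restrictScalars ℚ ℂ 𝔸
  have hsplit : z • a = algebraMap ℂ 𝔸 (z * μ) + z • (a - μ • 1) := by
    rw [Algebra.algebraMap_eq_smul_one, smul_sub, smul_smul]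
    abel
  rw [hsplit, exp_add_of_commute (Algebra.commutes' _ _), ← algebraMap_exp_comm,
    Complex.exp_eq_exp_ℂ, ← Algebra.smul_def]

namespace Matrix

variable {ι : Type*} [Fintype ι] [DecidableEq ι]

theorem exp_smul_mulVec_of_pow_mulVec_eq_zero (N : Matrix ι ι ℂ) {v : ι → ℂ} {k : ℕ}
    (hv : (N ^ k) *ᵥ v = 0) (z : ℂ) :
    exp (z • N) *ᵥ v = ∑ j ∈ range k, (z ^ j / j !) • ((N ^ j) *ᵥ v) := by
  let _ := Matrix.linftyOpNormedRing (n := ι) (α := ℂ)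
  let _ := Matrix.linftyOpNormedAlgebra (n := ι) (R := ℂ) (α := ℂ)
  have hsum := (exp_series_hasSum_exp' (𝕂 := ℂ) (z • N)).map (mulVec.addMonoidHomLeft v)
    (continuous_id.matrix_mulVec continuous_const)
  have hterm : ∀ j, mulVec.addMonoidHomLeft v (((j ! : ℂ))⁻¹ • (z • N) ^ j)
      = (z ^ j / j !) • ((N ^ j) *ᵥ v) := fun j => by
    change (((j ! : ℂ))⁻¹ • (z • N) ^ j) *ᵥ v = _
    rw [smul_pow, smul_smul, smul_mulVec, div_eq_inv_mul]
  have hvanish : ∀ j ∉ range k, (z ^ j / j !) • ((N ^ j) *ᵥ v) = 0 := fun j hj => by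
    have hjk : j = (j - k) + k := (Nat.sub_add_cancel (not_lt.mp (mem_range.not.mp hj))).symm
    have hNj : (N ^ j) *ᵥ v = 0 := by rw [hjk, pow_add, ← mulVec_mulVec, hv, mulVec_zero]
    rw [hNj, smul_zero]
  simp only [Function.comp_def, hterm] at hsum
  exact hsum.unique (hasSum_sum_of_ne_finset_zero hvanish)

theorem tendsto_exp_smul_mulVec_of_mem_maxGenEigenspace (S : Matrix ι ι ℂ) {μ : ℂ}
    (hμ : μ.re < 0) {v : ι → ℂ} (hv : v ∈ Module.End.maxGenEigenspace (toLin' S) μ) :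
    Tendsto (fun t : ℝ => exp (t • S) *ᵥ v) atTop (𝓝 0) := by
  obtain ⟨k, hk⟩ := (Module.End.mem_maxGenEigenspace _ _ _).mp hv
  have hN : ((S - μ • 1) ^ k) *ᵥ v = 0 := by
    have : (toLin' S - μ • 1) ^ k = toLinAlgEquiv' ((S - μ • 1) ^ k) := by
      rw [map_pow, map_sub, map_smul, map_one]; rfl
    rwa [this, toLinAlgEquiv'_apply] at hk
  have hexp : ∀ t : ℝ, exp (t • S) *ᵥ v = ∑ j ∈ range k,
      (Complex.exp (t * μ) * (t : ℂ) ^ j / j !) • ((S - μ • 1) ^ j *ᵥ v) := fun t => by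
    have hsplit : exp ((t : ℂ) • S) = Complex.exp (t * μ) • exp ((t : ℂ) • (S - μ • 1)) := by
      let _ := Matrix.linftyOpNormedRing (n := ι) (α := ℂ)
      let _ := Matrix.linftyOpNormedAlgebra (n := ι) (R := ℂ) (α := ℂ)
      exact exp_smul_eq_exp_mul_smul_exp_smul_sub S (t : ℂ) μ
    rw [← Complex.coe_smul, hsplit, smul_mulVec,
      exp_smul_mulVec_of_pow_mulVec_eq_zero _ hN, Finset.smul_sum]
    simp_rw [smul_smul, mul_div_assoc]
  simp_rw [hexp]
  rw [show (0 : ι → ℂ) = ∑ j ∈ range k, (0 : ℂ) • ((S - μ • 1) ^ j *ᵥ v) by simp]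
  refine tendsto_finsetSum _ fun j _ => Tendsto.smul_const ?_ _
  simpa using (Complex.tendsto_exp_mul_mul_pow_atTop hμ j).div_const (j ! : ℂ)

theorem tendsto_exp_smul_atTop_of_re_neg (S : Matrix ι ι ℂ)
    (hS : ∀ μ ∈ spectrum ℂ S, μ.re < 0) : Tendsto (fun t : ℝ => exp (t • S)) atTop (𝓝 0) := by
  have hvec : ∀ v, Tendsto (fun t : ℝ => exp (t • S) *ᵥ v) atTop (𝓝 0) := by
    intro v
    have hv : v ∈ ⨆ μ, Module.End.maxGenEigenspace (toLin' S) μ := by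
      rw [Module.End.iSup_maxGenEigenspace_eq_top]
      exact Submodule.mem_top
    refine Submodule.iSup_induction _
      (motive := fun v => Tendsto (fun t : ℝ => exp (t • S) *ᵥ v) atTop (𝓝 0)) hv
      (fun μ w hw => ?_) (by simp) fun w₁ w₂ h₁ h₂ => by simpa [mulVec_add] using h₁.add h₂
    rcases eq_or_ne w 0 with rfl | hw0
    · simp
    have hμ : Module.End.HasUnifEigenvalue (toLin' S) μ ⊤ :=
      (Submodule.ne_bot_iff _).mpr ⟨w, hw, hw0⟩
    refine tendsto_exp_smul_mulVec_of_mem_maxGenEigenspace S (hS μ ?_) hw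
    rw [← spectrum_toLin']
    exact Module.End.hasUnifEigenvalue_iff_mem_spectrum.mp (hμ.lt zero_lt_one)
  refine tendsto_pi_nhds.mpr fun i => tendsto_pi_nhds.mpr fun j => ?_
  simpa [mulVec_single_one] using tendsto_pi_nhds.mp (hvec (Pi.single j 1)) i

end Matrix

theorem spectralRadius_lt_one_of_norm_pow_lt_one {𝕜 A : Type*} [NormedField 𝕜] [NormedRing A]
    [NormedAlgebra 𝕜 A] [CompleteSpace A] [NormOneClass A] {a : A} {k : ℕ} (hk : 0 < k)
    (ha : ‖a ^ k‖ < 1) : spectralRadius 𝕜 a < 1 := by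
  obtain ⟨j, rfl⟩ : ∃ j, k = j + 1 := ⟨k - 1, by omega⟩
  calc spectralRadius 𝕜 a ≤ (‖a ^ (j + 1)‖₊ : ENNReal) ^ (1 / (j + 1) : ℝ) := by
        simpa using spectrum.spectralRadius_le_pow_nnnorm_pow_one_div 𝕜 a j
    _ < 1 := ENNReal.rpow_lt_one (mod_cast ha) (by positivity)

theorem stable_convex_combination_implies_periodic_contraction_general
    {n m : ℕ} (A : Fin m → Matrix (Fin n) (Fin n) ℂ) (α : Fin m → ℝ)
    (hstable : ∀ μ ∈ spectrum ℂ (∑ i, (α i) • A i), μ.re < 0) :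
    ∃ η : ℝ, 0 < η ∧
      spectralRadius ℂ
        (((List.ofFn fun i : Fin m =>
            NormedSpace.exp ((η * α i) • A i)).reverse).prod) < 1 := by
  rcases isEmpty_or_nonempty (Fin n) with hn | hn
  · exact ⟨1, one_pos, by simp [spectralRadius, spectrum.of_subsingleton]⟩
  let _ := Matrix.linftyOpNormedRing (n := Fin n) (α := ℂ)
  let _ := Matrix.linftyOpNormedAlgebra (n := Fin n) (R := ℝ) (α := ℂ)
  let _ := Matrix.linftyOpNormedAlgebra (n := Fin n) (R := ℂ) (α := ℂ)
  set l := (List.ofFn fun i => α i • A i).reverse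
  have hl : l.sum = ∑ i, α i • A i := by simp [l, List.sum_ofFn]
  obtain ⟨T, hexp, hT⟩ : ∃ T : ℝ, ‖exp (T • l.sum)‖ < 1 ∧ 0 < T := by
    rw [hl]
    have hdecay := Matrix.tendsto_exp_smul_atTop_of_re_neg _ hstable
    exact ((hdecay.norm.eventually (gt_mem_nhds (by simp))).and (eventually_gt_atTop 0)).exists
  obtain ⟨k, hk, hk0⟩ :=
    (((tendsto_list_prod_exp_smul_div_pow l T).norm.eventually (gt_mem_nhds hexp)).and
      (eventually_gt_atTop 0)).exists
  refine ⟨T / k, by positivity, ?_⟩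
  have hprod : (List.ofFn fun i => exp ((T / k * α i) • A i)).reverse.prod
      = (l.map fun x => exp ((T / k) • x)).prod := by
    simp [l, List.map_reverse, List.map_ofFn, Function.comp_def, smul_smul]
  rw [hprod]
  exact spectralRadius_lt_one_of_norm_pow_lt_one hk0 hk

/-- If a positive combination `A = ∑ i, α i • A i` of the subsystem
matrices is stable (every eigenvalue has strictly negative real part), then there is a
dwell-time scaling `η > 0` such that the one-period state-transition matrix
`exp (η αₘ Aₘ) ⋯ exp (η α₁ A₁)` has spectral radius strictly less than `1`. -/
theorem stable_convex_combination_implies_periodic_contraction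
    {n m : ℕ} (A : Fin m → Matrix (Fin n) (Fin n) ℂ) (α : Fin m → ℝ)
    (hα : ∀ i, 0 < α i)
    (hstable : ∀ μ ∈ spectrum ℂ (∑ i, (α i) • A i), μ.re < 0) :
    ∃ η : ℝ, 0 < η ∧
      spectralRadius ℂ
        (((List.ofFn fun i : Fin m =>
            NormedSpace.exp ((η * α i) • A i)).reverse).prod) < 1 :=
  stable_convex_combination_implies_periodic_contraction_general A α hstable
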